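/- arXiv:2106.05137 — 2 statements merged into one kernel-verified Lean document; each statement's English description precedes it below -/
import Mathlib

section
/- Let S be a finite set, 0 ≤ γ < 1, and for each s ∈ S a finite nonempty action set A with reward r : S × A → ℝ and transition p : S × A → (S → [0,1]) row-stochastic. If V* is the unique solution of the Bellman equation V*(s) = max_a [r(s,a) + γ Σ_{s'} p(s,a)(s')V*(s')], then V* is the componentwise-minimal vector V satisfying V(s) ≥ r(s,a) + γ Σ_{s'} p(s,a)(s')V(s') for all s, a. -/
theorem stmt_16 {S A : Type*} [Fintype S] [Fintype A] [Nonempty A]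
    (γ : ℝ) (hγ0 : 0 ≤ γ) (hγ1 : γ < 1)
    (r : S → A → ℝ)
    (p : S → A → S → ℝ) (hp0 : ∀ s a s', 0 ≤ p s a s') (hp1 : ∀ s a, ∑ s', p s a s' = 1)
    (Vstar : S → ℝ)
    (hBellman : ∀ s, Vstar s =
      Finset.univ.sup' Finset.univ_nonempty
        (fun a => r s a + γ * ∑ s', p s a s' * Vstar s')) :
    (∀ s a, r s a + γ * ∑ s', p s a s' * Vstar s' ≤ Vstar s) ∧
    (∀ V : S → ℝ, (∀ s a, r s a + γ * ∑ s', p s a s' * V s' ≤ V s) →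
      ∀ s, Vstar s ≤ V s) := by
  constructor
  · intro s a
    rw [hBellman s]
    exact Finset.le_sup' (fun a => r s a + γ * ∑ s', p s a s' * Vstar s') (Finset.mem_univ a)
  · intro V hV s
    have hS : Nonempty S := ⟨s⟩
    have huniv : (Finset.univ : Finset S).Nonempty := Finset.univ_nonempty
    set D : S → ℝ := fun t => Vstar t - V t with hD
    obtain ⟨s0, -, hs0⟩ := Finset.exists_mem_eq_sup' huniv D
    have hM : ∀ t, D t ≤ D s0 := fun t => hs0 ▸ Finset.le_sup' D (Finset.mem_univ t)
    -- pick action achieving Bellman sup at s0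
    obtain ⟨a, -, ha⟩ := Finset.exists_mem_eq_sup' (Finset.univ_nonempty (α := A))
      (fun a => r s0 a + γ * ∑ s', p s0 a s' * Vstar s')
    have hVs0 : Vstar s0 = r s0 a + γ * ∑ s', p s0 a s' * Vstar s' := by
      rw [hBellman s0, ha]
    have hsum : ∑ s', p s0 a s' * D s' ≤ D s0 := by
      calc ∑ s', p s0 a s' * D s' ≤ ∑ s', p s0 a s' * D s0 :=
            Finset.sum_le_sum fun i _ => mul_le_mul_of_nonneg_left (hM i) (hp0 s0 a i)
        _ = D s0 := by rw [← Finset.sum_mul, hp1, one_mul]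
    have key : D s0 ≤ γ * D s0 := by
      have h1 : Vstar s0 - V s0 ≤ γ * ∑ s', p s0 a s' * D s' := by
        have := hV s0 a
        have : Vstar s0 - V s0 ≤ γ * ∑ s', p s0 a s' * Vstar s' - γ * ∑ s', p s0 a s' * V s' := by
          rw [hVs0]; linarith
        calc Vstar s0 - V s0 ≤ _ := this
          _ = γ * ∑ s', p s0 a s' * D s' := by
            rw [← mul_sub, ← Finset.sum_sub_distrib]
            simp [hD, mul_sub]
      calc D s0 ≤ γ * ∑ s', p s0 a s' * D s' := h1
        _ ≤ γ * D s0 := mul_le_mul_of_nonneg_left hsum hγ0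
    have hD0 : D s0 ≤ 0 := by nlinarith
    have := hM s
    simp only [hD] at this hD0
    linarith
end

section
/- Let Θ, A be finite sets, μ a distribution on Θ, and R̃ : Θ × A → ℝ. The set 𝒜 ⊆ Δ(Θ × A) of joint distributions x(θ,a) = μ(θ)π(θ,g_a) induced by incentive-compatible action-advice strategies π is a convex, compact polytope: it equals the set of x : Θ × A → [0,1] satisfying (i) Σ_a x(θ,a) = μ(θ) for all θ, and (ii) Σ_θ x(θ,a)(R̃(θ,a) − R̃(θ,a')) ≥ 0 for all a, a' ∈ A. -/
theorem stmt_18 {Θ A : Type*} [Fintype Θ] [Fintype A] [Nonempty A]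
    (μ : Θ → ℝ) (hμ0 : ∀ θ, 0 ≤ μ θ) (hμ1 : ∑ θ, μ θ = 1)
    (R : Θ → A → ℝ)
    (𝒜 : Set (Θ → A → ℝ))
    (h𝒜 : 𝒜 = {x | ∃ π : Θ → A → ℝ,
      (∀ θ a, 0 ≤ π θ a) ∧ (∀ θ, ∑ a, π θ a = 1) ∧
      -- incentive compatibility: the agent weakly prefers the advised action
      -- under the Bayesian posterior (whenever the advice has positive probability)
      (∀ a a' : A, 0 < (∑ θ, μ θ * π θ a) →
        0 ≤ ∑ θ, (μ θ * π θ a / ∑ θ', μ θ' * π θ' a) * (R θ a - R θ a')) ∧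
      (∀ θ a, x θ a = μ θ * π θ a)}) :
    Convex ℝ 𝒜 ∧ IsCompact 𝒜 ∧
    𝒜 = {x | (∀ θ a, 0 ≤ x θ a ∧ x θ a ≤ 1) ∧
          (∀ θ, ∑ a, x θ a = μ θ) ∧
          (∀ a a' : A, 0 ≤ ∑ θ, x θ a * (R θ a - R θ a'))} := by
  have hset : 𝒜 = {x | (∀ θ a, 0 ≤ x θ a ∧ x θ a ≤ 1) ∧
          (∀ θ, ∑ a, x θ a = μ θ) ∧
          (∀ a a' : A, 0 ≤ ∑ θ, x θ a * (R θ a - R θ a'))} := by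
    rw [h𝒜]
    ext x
    constructor
    · rintro ⟨π, hπ0, hπ1, hIC, hx⟩
      have hπle : ∀ θ a, π θ a ≤ 1 := by
        intro θ a
        calc π θ a ≤ ∑ a', π θ a' :=
          Finset.single_le_sum (fun i _ => hπ0 θ i) (Finset.mem_univ a)
        _ = 1 := hπ1 θ
      have hμle : ∀ θ, μ θ ≤ 1 := by
        intro θ
        calc μ θ ≤ ∑ θ', μ θ' :=
          Finset.single_le_sum (fun i _ => hμ0 i) (Finset.mem_univ θ)
        _ = 1 := hμ1
      refine ⟨fun θ a => ?_, fun θ => ?_, fun a a' => ?_⟩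
      · rw [hx]
        constructor
        · exact mul_nonneg (hμ0 θ) (hπ0 θ a)
        · calc μ θ * π θ a ≤ 1 * 1 :=
            mul_le_mul (hμle θ) (hπle θ a) (hπ0 θ a) zero_le_one
          _ = 1 := by ring
      · simp only [hx, ← Finset.mul_sum, hπ1 θ, mul_one]
      · rcases eq_or_lt_of_le (Finset.sum_nonneg fun θ _ =>
          mul_nonneg (hμ0 θ) (hπ0 θ a)) with hS | hS
        · have hz : ∀ θ ∈ Finset.univ, μ θ * π θ a = 0 :=
            (Finset.sum_eq_zero_iff_of_nonneg fun θ _ =>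
              mul_nonneg (hμ0 θ) (hπ0 θ a)).mp hS.symm
          apply le_of_eq
          symm
          apply Finset.sum_eq_zero
          intro θ _
          rw [hx, hz θ (Finset.mem_univ θ), zero_mul]
        · have h := hIC a a' hS
          have h2 : (0:ℝ) ≤ (∑ θ, μ θ * π θ a * (R θ a - R θ a')) / (∑ θ', μ θ' * π θ' a) := by
            calc (0:ℝ) ≤ ∑ θ, (μ θ * π θ a / ∑ θ', μ θ' * π θ' a) * (R θ a - R θ a') := h
            _ = (∑ θ, μ θ * π θ a * (R θ a - R θ a')) / (∑ θ', μ θ' * π θ' a) := by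
              rw [Finset.sum_div]
              exact Finset.sum_congr rfl fun θ _ => by rw [div_mul_eq_mul_div]
          have h3 := (div_nonneg_iff.mp h2)
          have hT : (0:ℝ) ≤ ∑ θ, μ θ * π θ a * (R θ a - R θ a') := by
            rcases h3 with ⟨h4, _⟩ | ⟨_, h5⟩
            · exact h4
            · linarith
          calc (0:ℝ) ≤ ∑ θ, μ θ * π θ a * (R θ a - R θ a') := hT
          _ = ∑ θ, x θ a * (R θ a - R θ a') :=
            Finset.sum_congr rfl fun θ _ => by rw [hx]
    · rintro ⟨h01, hsum, hIC⟩
      set π : Θ → A → ℝ := fun θ a =>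
        if μ θ = 0 then (Fintype.card A : ℝ)⁻¹ else x θ a / μ θ with hπdef
      have hcard : (0:ℝ) < Fintype.card A := by
        exact_mod_cast Fintype.card_pos
      have hxz : ∀ θ, μ θ = 0 → ∀ a, x θ a = 0 := by
        intro θ hθ a
        have := hsum θ
        rw [hθ] at this
        exact (Finset.sum_eq_zero_iff_of_nonneg fun a' _ => (h01 θ a').1).mp this
          a (Finset.mem_univ a)
      have key : ∀ θ a, μ θ * π θ a = x θ a := by
        intro θ a
        by_cases hθ : μ θ = 0
        · simp [hπdef, hθ, hxz θ hθ a]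
        · simp only [hπdef, if_neg hθ]
          field_simp
      refine ⟨π, fun θ a => ?_, fun θ => ?_, fun a a' hS => ?_, fun θ a => (key θ a).symm⟩
      · by_cases hθ : μ θ = 0
        · simp only [hπdef, if_pos hθ]
          positivity
        · simp only [hπdef, if_neg hθ]
          exact div_nonneg (h01 θ a).1 (hμ0 θ)
      · by_cases hθ : μ θ = 0
        · simp only [hπdef, if_pos hθ]
          rw [Finset.sum_const, Finset.card_univ, nsmul_eq_mul]
          field_simp
        · simp only [hπdef, if_neg hθ, ← Finset.sum_div, hsum θ]
          field_simp
      · simp only [key] at hS ⊢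
        have : ∑ θ, x θ a / (∑ θ', x θ' a) * (R θ a - R θ a')
            = (∑ θ, x θ a * (R θ a - R θ a')) / (∑ θ', x θ' a) := by
          rw [Finset.sum_div]
          exact Finset.sum_congr rfl fun θ _ => by rw [div_mul_eq_mul_div]
        rw [this]
        exact div_nonneg (hIC a a') hS.le
  rw [hset]
  refine ⟨?_, ?_, rfl⟩
  · -- convexity
    rintro x ⟨hx01, hxsum, hxIC⟩ y ⟨hy01, hysum, hyIC⟩ s t hs ht hst
    refine ⟨fun θ a => ?_, fun θ => ?_, fun a a' => ?_⟩
    · constructor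
      · have := (hx01 θ a).1; have := (hy01 θ a).1
        simp only [Pi.add_apply, Pi.smul_apply, smul_eq_mul]
        positivity
      · simp only [Pi.add_apply, Pi.smul_apply, smul_eq_mul]
        have h1 := (hx01 θ a).2; have h2 := (hy01 θ a).2
        nlinarith [(hx01 θ a).1, (hy01 θ a).1]
    · simp only [Pi.add_apply, Pi.smul_apply, smul_eq_mul]
      rw [Finset.sum_add_distrib, ← Finset.mul_sum, ← Finset.mul_sum, hxsum θ, hysum θ]
      linear_combination μ θ * hst
    · simp only [Pi.add_apply, Pi.smul_apply, smul_eq_mul]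
      have : ∑ θ, (s * x θ a + t * y θ a) * (R θ a - R θ a')
          = s * (∑ θ, x θ a * (R θ a - R θ a')) + t * (∑ θ, y θ a * (R θ a - R θ a')) := by
        rw [Finset.mul_sum, Finset.mul_sum, ← Finset.sum_add_distrib]
        exact Finset.sum_congr rfl fun θ _ => by ring
      rw [this]
      have := hxIC a a'; have := hyIC a a'
      positivity
  · -- compactness
    have hcont : ∀ (θ : Θ) (a : A), Continuous fun x : Θ → A → ℝ => x θ a :=
      fun θ a => (continuous_apply a).comp (continuous_apply θ)
    have hsub : {x : Θ → A → ℝ | (∀ θ a, 0 ≤ x θ a ∧ x θ a ≤ 1) ∧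
          (∀ θ, ∑ a, x θ a = μ θ) ∧
          (∀ a a' : A, 0 ≤ ∑ θ, x θ a * (R θ a - R θ a'))}
        ⊆ Set.pi Set.univ fun _ : Θ => Set.pi Set.univ fun _ : A => Set.Icc (0:ℝ) 1 := by
      rintro x ⟨h01, -, -⟩ θ - a -
      exact ⟨(h01 θ a).1, (h01 θ a).2⟩
    have hcmp : IsCompact (Set.pi Set.univ fun _ : Θ =>
        Set.pi Set.univ fun _ : A => Set.Icc (0:ℝ) 1) :=
      isCompact_univ_pi fun _ => isCompact_univ_pi fun _ => isCompact_Icc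
    apply IsCompact.of_isClosed_subset hcmp ?_ hsub
    have h1 : IsClosed {x : Θ → A → ℝ | ∀ θ a, 0 ≤ x θ a ∧ x θ a ≤ 1} := by
      have : {x : Θ → A → ℝ | ∀ θ a, 0 ≤ x θ a ∧ x θ a ≤ 1}
          = ⋂ θ, ⋂ a, {x : Θ → A → ℝ | 0 ≤ x θ a ∧ x θ a ≤ 1} := by
        ext x; simp
      rw [this]
      refine isClosed_iInter fun θ => isClosed_iInter fun a => ?_
      exact IsClosed.inter (isClosed_le continuous_const (hcont θ a))
        (isClosed_le (hcont θ a) continuous_const)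
    have h2 : IsClosed {x : Θ → A → ℝ | ∀ θ, ∑ a, x θ a = μ θ} := by
      have : {x : Θ → A → ℝ | ∀ θ, ∑ a, x θ a = μ θ}
          = ⋂ θ, {x : Θ → A → ℝ | ∑ a, x θ a = μ θ} := by ext x; simp
      rw [this]
      refine isClosed_iInter fun θ => ?_
      exact isClosed_eq (continuous_finset_sum _ fun a _ => hcont θ a) continuous_const
    have h3 : IsClosed {x : Θ → A → ℝ | ∀ a a' : A, 0 ≤ ∑ θ, x θ a * (R θ a - R θ a')} := by
      have : {x : Θ → A → ℝ | ∀ a a' : A, 0 ≤ ∑ θ, x θ a * (R θ a - R θ a')}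
          = ⋂ a, ⋂ a', {x : Θ → A → ℝ | 0 ≤ ∑ θ, x θ a * (R θ a - R θ a')} := by
        ext x; simp
      rw [this]
      refine isClosed_iInter fun a => isClosed_iInter fun a' => ?_
      exact isClosed_le continuous_const
        (continuous_finset_sum _ fun θ _ => (hcont θ a).mul continuous_const)
    have : {x : Θ → A → ℝ | (∀ θ a, 0 ≤ x θ a ∧ x θ a ≤ 1) ∧
          (∀ θ, ∑ a, x θ a = μ θ) ∧
          (∀ a a' : A, 0 ≤ ∑ θ, x θ a * (R θ a - R θ a'))}
        = {x : Θ → A → ℝ | ∀ θ a, 0 ≤ x θ a ∧ x θ a ≤ 1}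
          ∩ ({x | ∀ θ, ∑ a, x θ a = μ θ}
          ∩ {x | ∀ a a' : A, 0 ≤ ∑ θ, x θ a * (R θ a - R θ a')}) := by
      ext x; simp [Set.mem_setOf_eq, Set.mem_inter_iff, and_assoc]
    rw [this]
    exact h1.inter (h2.inter h3)
end
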